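/- For a quaternion algebra D over a field of characteristic not 2, the kernel of the homomorphism (x₁,x₂) ↦ σ_{x₁,x₂} from D^× × D^× to the orthogonal group of the norm form is the diagonally embedded center, i.e., σ_{x₁,x₂} is the identity if and only if x₁ = x₂ and x₁ lies in the center of D. -/
import Mathlib

open Quaternion

/-- For a quaternion algebra `D = ℍ[K,c₁,c₂]` over a field `K` of characteristic
`≠ 2` and units `x₁, x₂`, the map `σ_{x₁,x₂} : y ↦ x₁ y x₂⁻¹` is the identity if and only if
`x₁ = x₂` and `x₁` lies in the center of `D`; i.e. the kernel of `(x₁,x₂) ↦ σ_{x₁,x₂}` is the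
diagonally embedded center. -/
theorem stmt1 {K : Type*} [Field K] (h2 : (2 : K) ≠ 0) (c₁ c₂ : K)
    (x₁ x₂ : (ℍ[K, c₁, c₂])ˣ) :
    (∀ y : ℍ[K, c₁, c₂],
        (x₁ : ℍ[K, c₁, c₂]) * y * ((x₂⁻¹ : (ℍ[K, c₁, c₂])ˣ) : ℍ[K, c₁, c₂]) = y) ↔
      ((x₁ : ℍ[K, c₁, c₂]) = (x₂ : ℍ[K, c₁, c₂]) ∧
        (x₁ : ℍ[K, c₁, c₂]) ∈ Set.center ℍ[K, c₁, c₂]) := by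
  constructor
  · intro h
    have h1 := h 1
    rw [mul_one] at h1
    have hx : x₁ = x₂ := by
      have : x₁ * x₂⁻¹ = 1 := Units.ext h1
      exact eq_of_div_eq_one this
    refine ⟨by rw [hx], ?_⟩
    rw [Semigroup.mem_center_iff]
    intro g
    have hg := h g
    rw [← hx] at hg
    calc g * ↑x₁ = (↑x₁ * g * ↑x₁⁻¹) * ↑x₁ := by rw [hg]
      _ = ↑x₁ * g * (↑x₁⁻¹ * ↑x₁) := by rw [mul_assoc]
      _ = ↑x₁ * g := by rw [Units.inv_mul, mul_one]
  · rintro ⟨hx, hc⟩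
    intro y
    rw [Semigroup.mem_center_iff] at hc
    rw [← hc y, hx, mul_assoc, Units.mul_inv, mul_one]
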